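/- Let A be a linear endomorphism of a nontrivial finite-dimensional complex vector space and B a linear endomorphism of a finite-dimensional normed real vector space, and suppose there exists a constant C > 0 such that |tr(A^m)| ≤ C · ‖B^m‖ for all integers m ≥ 1, where ‖ · ‖ denotes the operator norm. Then the spectral radius of A (the maximum modulus of its complex eigenvalues) is at most limsup_{m→∞} ‖B^m‖^{1/m}. -/

import Mathlib

/-!
Write `tr (A ^ m) = ∑ d_μ μ ^ m` over the eigenvalues `μ` of `A`, with multiplicities `d_μ > 0`,
and let `ρ` be the largest `|μ|`. Since the torus is a compact group, for infinitely many `m` all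
the unimodular numbers `(μ / ρ) ^ m` with `|μ| = ρ` are simultaneously close to `1`, while the
terms with `|μ| < ρ` are `o(ρ ^ m)`. For those `m` we get `|tr (A ^ m)| ≥ κ ρ ^ m` with `κ > 0`,
hence `‖B ^ m‖ ≥ (κ / C) ρ ^ m`, and taking `m`-th roots gives `ρ ≤ limsup ‖B ^ m‖ ^ (1 / m)`.
-/

open Filter Topology Module.End

lemma frequently_forall_norm_pow_sub_one_lt {ι : Type*} (s : Finset ι) (z : ι → ℂ)
    (hz : ∀ i ∈ s, ‖z i‖ = 1) {δ : ℝ} (hδ : 0 < δ) :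
    ∃ᶠ m in atTop, ∀ i ∈ s, ‖z i ^ m - 1‖ < δ := by
  let u : s → Circle := fun i => ⟨z i, mem_sphere_zero_iff_norm.2 (hz i i.2)⟩
  have hnear : ∀ᶠ v in 𝓝 (1 : s → Circle), ∀ i, ‖(v i : ℂ) - 1‖ < δ := by
    refine eventually_all.2 fun i => ?_
    have hcont : Tendsto (fun v : s → Circle => (v i : ℂ)) (𝓝 1) (𝓝 1) :=
      (continuous_subtype_val.comp (continuous_apply i)).tendsto 1
    simpa [dist_eq_norm] using hcont.eventually (Metric.ball_mem_nhds 1 hδ)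
  exact ((mapClusterPt_one_atTop_pow u).frequently hnear).mono fun m hm i hi => hm ⟨i, hi⟩

lemma exists_frequently_le_norm_sum_mul_pow_of_norm_le_one {ι : Type*} (s : Finset ι)
    (c : ι → ℝ) (hc : ∀ i ∈ s, 0 < c i) (z : ι → ℂ) (hz : ∀ i ∈ s, ‖z i‖ ≤ 1)
    (hmax : ∃ i ∈ s, ‖z i‖ = 1) :
    ∃ κ > 0, ∃ᶠ m in atTop, κ ≤ ‖∑ i ∈ s, (c i : ℂ) * z i ^ m‖ := by
  classical
  set P := s.filter fun i => ‖z i‖ = 1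
  set Q := s.filter fun i => ¬‖z i‖ = 1
  set k := ∑ i ∈ P, c i
  obtain ⟨i₀, hi₀, hzi₀⟩ := hmax
  have hk : 0 < k := Finset.sum_pos' (fun i hi => (hc i (Finset.mem_filter.1 hi).1).le)
    ⟨i₀, Finset.mem_filter.2 ⟨hi₀, hzi₀⟩, hc i₀ hi₀⟩
  have hQ : Tendsto (fun m : ℕ => ∑ i ∈ Q, c i * ‖z i‖ ^ m) atTop (𝓝 0) := by
    rw [← Finset.sum_const_zero (s := Q)]
    refine tendsto_finsetSum Q fun i hi => ?_
    obtain ⟨his, hzi⟩ := Finset.mem_filter.1 hi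
    simpa using (tendsto_pow_atTop_nhds_zero_of_lt_one (norm_nonneg (z i))
      (lt_of_le_of_ne (hz i his) hzi)).const_mul (c i)
  have hP := frequently_forall_norm_pow_sub_one_lt P z (fun i hi => (Finset.mem_filter.1 hi).2)
    (by norm_num : (0 : ℝ) < 1 / 4)
  refine ⟨k / 2, half_pos hk, (hP.and_eventually (hQ.eventually_lt_const (by positivity :
    0 < k / 4))).mono fun m ⟨hPm, hQm⟩ => ?_⟩
  have hsplit : ∑ i ∈ s, (c i : ℂ) * z i ^ m - k
      = ∑ i ∈ P, (c i : ℂ) * (z i ^ m - 1) + ∑ i ∈ Q, (c i : ℂ) * z i ^ m := by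
    rw [← Finset.sum_filter_add_sum_filter_not s fun i => ‖z i‖ = 1]
    simp only [k, P, Q, Complex.ofReal_sum, mul_sub, mul_one, Finset.sum_sub_distrib]
    ring
  have hPbound : ‖∑ i ∈ P, (c i : ℂ) * (z i ^ m - 1)‖ ≤ k / 4 :=
    calc ‖∑ i ∈ P, (c i : ℂ) * (z i ^ m - 1)‖ ≤ ∑ i ∈ P, c i * (1 / 4) := by
          refine (norm_sum_le _ _).trans (Finset.sum_le_sum fun i hi => ?_)
          rw [norm_mul, Complex.norm_real, Real.norm_of_nonneg
            (hc i (Finset.mem_filter.1 hi).1).le]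
          exact mul_le_mul_of_nonneg_left (hPm i hi).le (hc i (Finset.mem_filter.1 hi).1).le
      _ = k / 4 := by rw [← Finset.sum_mul]; ring
  have hQbound : ‖∑ i ∈ Q, (c i : ℂ) * z i ^ m‖ ≤ k / 4 := by
    refine (norm_sum_le _ _).trans (le_trans (Finset.sum_le_sum fun i hi => ?_) hQm.le)
    rw [norm_mul, norm_pow, Complex.norm_real, Real.norm_of_nonneg
      (hc i (Finset.mem_filter.1 hi).1).le]
  have hk_norm : ‖(k : ℂ)‖ = k := by rw [Complex.norm_real, Real.norm_of_nonneg hk.le]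
  have hrev := norm_sub_norm_le (k : ℂ) (∑ i ∈ s, (c i : ℂ) * z i ^ m)
  rw [norm_sub_rev, hsplit, hk_norm] at hrev
  linarith [norm_add_le (∑ i ∈ P, (c i : ℂ) * (z i ^ m - 1)) (∑ i ∈ Q, (c i : ℂ) * z i ^ m)]

lemma exists_frequently_le_norm_sum_mul_pow {ι : Type*} (s : Finset ι)
    (c : ι → ℝ) (hc : ∀ i ∈ s, 0 < c i) (z : ι → ℂ) {ρ : ℝ} (hz : ∀ i ∈ s, ‖z i‖ ≤ ρ)
    (hmax : ∃ i ∈ s, ‖z i‖ = ρ) :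
    ∃ κ > 0, ∃ᶠ m in atTop, κ * ρ ^ m ≤ ‖∑ i ∈ s, (c i : ℂ) * z i ^ m‖ := by
  obtain ⟨i₀, hi₀, rfl⟩ := hmax
  rcases (norm_nonneg (z i₀)).eq_or_lt with hρ | hρ
  · refine ⟨1, one_pos, (eventually_ge_atTop 1).frequently.mono fun m hm => ?_⟩
    rw [← hρ, zero_pow (by omega), mul_zero]
    exact norm_nonneg _
  set ρ := ‖z i₀‖
  obtain ⟨κ, hκ, hfreq⟩ := exists_frequently_le_norm_sum_mul_pow_of_norm_le_one s c hc
    (fun i => z i / ρ) (fun i hi => by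
      rw [norm_div, Complex.norm_real, Real.norm_of_nonneg hρ.le]
      exact div_le_one_of_le₀ (hz i hi) hρ.le)
    ⟨i₀, hi₀, by rw [norm_div, Complex.norm_real, Real.norm_of_nonneg hρ.le, div_self hρ.ne']⟩
  refine ⟨κ, hκ, hfreq.mono fun m hm => ?_⟩
  have hscale : ∑ i ∈ s, (c i : ℂ) * (z i / ρ) ^ m
      = (∑ i ∈ s, (c i : ℂ) * z i ^ m) / (ρ : ℂ) ^ m := by
    simp only [div_pow, mul_div_assoc, Finset.sum_div]
  rw [hscale, norm_div, norm_pow, Complex.norm_real, Real.norm_of_nonneg hρ.le,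
    le_div_iff₀ (pow_pos hρ m)] at hm
  exact hm

lemma isBoundedUnder_le_norm_pow_rpow_inv {R : Type*} [SeminormedRing R] (a : R) :
    IsBoundedUnder (· ≤ ·) atTop fun m : ℕ => ‖a ^ m‖ ^ (m : ℝ)⁻¹ := by
  refine isBoundedUnder_of ⟨max ‖a‖ 1, fun m => ?_⟩
  rcases Nat.eq_zero_or_pos m with rfl | hm
  · simp
  · have hpow : ‖a ^ m‖ ≤ max ‖a‖ 1 ^ m :=
      (norm_pow_le' a hm).trans (pow_le_pow_left₀ (norm_nonneg a) (le_max_left _ _) m)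
    calc ‖a ^ m‖ ^ (m : ℝ)⁻¹ ≤ (max ‖a‖ 1 ^ m) ^ (m : ℝ)⁻¹ := by gcongr
      _ = max ‖a‖ 1 := Real.pow_rpow_inv_natCast (by positivity) hm.ne'

lemma le_limsup_rpow_inv_of_frequently_le {b : ℕ → ℝ}
    (hbdd : IsBoundedUnder (· ≤ ·) atTop fun m : ℕ => b m ^ (m : ℝ)⁻¹) {κ ρ : ℝ}
    (hκ : 0 < κ) (hρ : 0 ≤ ρ) (h : ∃ᶠ m in atTop, κ * ρ ^ m ≤ b m) :
    ρ ≤ limsup (fun m : ℕ => b m ^ (m : ℝ)⁻¹) atTop := by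
  have hroot : Tendsto (fun m : ℕ => κ ^ (m : ℝ)⁻¹ * ρ) atTop (𝓝 ρ) := by
    have hinv : Tendsto (fun m : ℕ => (m : ℝ)⁻¹) atTop (𝓝 0) :=
      tendsto_inv_atTop_zero.comp tendsto_natCast_atTop_atTop
    simpa using (tendsto_const_nhds.rpow hinv (Or.inl hκ.ne')).mul_const ρ
  refine le_of_forall_pos_le_add fun ε hε => ?_
  rw [← sub_le_iff_le_add]
  refine le_limsup_of_frequently_le ?_ hbdd
  refine (h.and_eventually ((hroot.eventually_const_le (sub_lt_self ρ hε)).and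
    (eventually_ge_atTop 1))).mono fun m ⟨hm, hεm, hm1⟩ => ?_
  calc ρ - ε ≤ κ ^ (m : ℝ)⁻¹ * ρ := hεm
    _ = (κ * ρ ^ m) ^ (m : ℝ)⁻¹ := by
      rw [Real.mul_rpow hκ.le (by positivity), Real.pow_rpow_inv_natCast hρ (by omega)]
    _ ≤ b m ^ (m : ℝ)⁻¹ := by gcongr

namespace Module.End

lemma trace_pow_of_isNilpotent_sub_algebraMap {R M : Type*} [CommRing R] [IsReduced R]
    [AddCommGroup M] [Module R M] [Module.Free R M] [Module.Finite R M] {f : End R M} {μ : R}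
    (hf : IsNilpotent (f - algebraMap R (End R M) μ)) (m : ℕ) :
    LinearMap.trace R M (f ^ m) = Module.finrank R M * μ ^ m := by
  induction m with
  | zero => simp
  | succ n ih =>
    rw [pow_succ, mul_eq_comp, LinearMap.trace_comp_eq_mul_of_commute_of_isNilpotent μ
      ((Commute.refl f).pow_left n) hf, ih, pow_succ]
    ring

variable {K V : Type*} [Field K] [AddCommGroup V] [Module K V] [FiniteDimensional K V]

lemma trace_restrict_maxGenEigenspace_pow (f : End K V) (μ : K) (m : ℕ) :
    LinearMap.trace K (f.maxGenEigenspace μ)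
        ((f ^ m).restrict (f.mapsTo_maxGenEigenspace_of_comm ((Commute.refl f).pow_right m) μ))
      = Module.finrank K (f.maxGenEigenspace μ) * μ ^ m := by
  have hf := f.mapsTo_maxGenEigenspace_of_comm (Commute.refl f) μ
  have hsub : f.restrict hf - algebraMap K (End K (f.maxGenEigenspace μ)) μ
      = (f - algebraMap K (End K V) μ).restrict
          (f.mapsTo_maxGenEigenspace_of_comm (Algebra.mul_sub_algebraMap_commutes f μ) μ) := by
    ext x; rfl
  rw [← pow_restrict m hf, trace_pow_of_isNilpotent_sub_algebraMap (by
    rw [hsub]; exact f.isNilpotent_restrict_maxGenEigenspace_sub_algebraMap μ)]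

lemma trace_pow_eq_sum_finrank_mul_pow [IsAlgClosed K] (f : End K V)
    (hfin : {μ : K | f.maxGenEigenspace μ ≠ ⊥}.Finite) (m : ℕ) :
    LinearMap.trace K V (f ^ m)
      = ∑ μ ∈ hfin.toFinset, (Module.finrank K (f.maxGenEigenspace μ) : K) * μ ^ m := by
  classical
  have hinternal := DirectSum.isInternal_submodule_of_iSupIndep_of_iSup_eq_top
    f.independent_maxGenEigenspace f.iSup_maxGenEigenspace_eq_top
  rw [LinearMap.trace_eq_sum_trace_restrict' hinternal hfin
    (fun μ => f.mapsTo_maxGenEigenspace_of_comm ((Commute.refl f).pow_right m) μ)]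
  exact Finset.sum_congr rfl fun μ _ => trace_restrict_maxGenEigenspace_pow f μ m

end Module.End

theorem stmt7_general {V : Type*} [AddCommGroup V] [Module ℂ V] [FiniteDimensional ℂ V]
    {W : Type*} [NormedAddCommGroup W] [NormedSpace ℝ W]
    (A : V →ₗ[ℂ] V) (B : W →L[ℝ] W) (C : ℝ) (hC : 0 < C)
    (hbound : ∀ m : ℕ, 1 ≤ m →
      ‖LinearMap.trace ℂ V (A ^ m)‖ ≤ C * ‖B ^ m‖) :
    ∀ μ : ℂ, Module.End.HasEigenvalue A μ →
      ‖μ‖ ≤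
        Filter.limsup (fun m : ℕ => ‖B ^ m‖ ^ ((m : ℝ)⁻¹)) Filter.atTop := by
  intro μ hμ
  have hfin : {ν : ℂ | maxGenEigenspace A ν ≠ ⊥}.Finite :=
    WellFoundedGT.finite_ne_bot_of_iSupIndep (independent_maxGenEigenspace A)
  set s := hfin.toFinset
  have hμs : μ ∈ s := hfin.mem_toFinset.2
    (ne_bot_of_le_ne_bot (hasEigenvalue_iff.1 hμ) eigenspace_le_maxGenEigenspace)
  have hmult : ∀ ν ∈ s, (0 : ℝ) < Module.finrank ℂ (maxGenEigenspace A ν) := fun ν hν =>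
    Nat.cast_pos.2 (Module.finrank_pos_iff.2
      (Submodule.nontrivial_iff_ne_bot.2 (hfin.mem_toFinset.1 hν)))
  set ρ := s.sup' ⟨μ, hμs⟩ (‖·‖)
  obtain ⟨ν, hνs, hν⟩ := s.exists_mem_eq_sup' ⟨μ, hμs⟩ (‖·‖)
  obtain ⟨κ, hκ, hfreq⟩ := exists_frequently_le_norm_sum_mul_pow s _ hmult id
    (fun ν hν => s.le_sup' (‖·‖) hν) ⟨ν, hνs, hν.symm⟩
  have hB : ∃ᶠ m in atTop, κ / C * ρ ^ m ≤ ‖B ^ m‖ :=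
    (hfreq.and_eventually (eventually_ge_atTop 1)).mono fun m ⟨hm, hm1⟩ => by
      rw [div_mul_eq_mul_div, div_le_iff₀ hC, mul_comm _ C]
      refine hm.trans (le_of_eq_of_le ?_ (hbound m hm1))
      rw [trace_pow_eq_sum_finrank_mul_pow A hfin m]
      simp [s]
  exact (s.le_sup' (‖·‖) hμs).trans (le_limsup_rpow_inv_of_frequently_le
    (isBoundedUnder_le_norm_pow_rpow_inv B) (div_pos hκ hC) (hν ▸ norm_nonneg ν) hB)

/-- Let `A` be a linear endomorphism of a nontrivial finite-dimensional
complex vector space and `B` a (continuous) linear endomorphism of a finite-dimensional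
normed real vector space, and suppose there is `C > 0` with `|tr(A^m)| ≤ C * ‖B^m‖` for all
`m ≥ 1`. Then every (complex) eigenvalue `μ` of `A` satisfies
`|μ| ≤ limsup_{m→∞} ‖B^m‖^{1/m}`, i.e. the spectral radius of `A` is at most this limsup. -/
theorem stmt7 {V : Type*} [AddCommGroup V] [Module ℂ V] [FiniteDimensional ℂ V] [Nontrivial V]
    {W : Type*} [NormedAddCommGroup W] [NormedSpace ℝ W] [FiniteDimensional ℝ W]
    (A : V →ₗ[ℂ] V) (B : W →L[ℝ] W) (C : ℝ) (hC : 0 < C)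
    (hbound : ∀ m : ℕ, 1 ≤ m →
      ‖LinearMap.trace ℂ V (A ^ m)‖ ≤ C * ‖B ^ m‖) :
    ∀ μ : ℂ, Module.End.HasEigenvalue A μ →
      ‖μ‖ ≤
        Filter.limsup (fun m : ℕ => ‖B ^ m‖ ^ ((m : ℝ)⁻¹)) Filter.atTop :=
  stmt7_general A B C hC hbound
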